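/- Let G be a finite simple connected graph with exactly k triangles (3-element sets of pairwise adjacent vertices), and let m be the number of vertices of G that lie on no triangle. Then the Radon number of G with respect to Δ-convexity satisfies r_Δ(G) ≤ m + 2k. -/
import Mathlib


variable {V : Type*}

/-- A set `S` is Δ-convex in `G` if every vertex adjacent to two adjacent vertices of `S`
belongs to `S`. -/
def DeltaConvex (G : SimpleGraph V) (S : Set V) : Prop :=
  ∀ ⦃u v w : V⦄, u ∈ S → v ∈ S → G.Adj u v → G.Adj w u → G.Adj w v → w ∈ S

/-- The Δ-convex hull of `S`: the smallest Δ-convex set containing `S`. -/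
def deltaHull (G : SimpleGraph V) (S : Set V) : Set V :=
  ⋂₀ {T : Set V | S ⊆ T ∧ DeltaConvex G T}

/-- `S` is Helly independent: the intersection of the hulls of the sets `S \ {a}`, `a ∈ S`,
is empty. -/
def HellyIndep (G : SimpleGraph V) (S : Set V) : Prop :=
  (⋂ a ∈ S, deltaHull G (S \ {a})) = ∅

/-- The Helly number of `G` w.r.t. Δ-convexity: the maximum cardinality of a Helly
independent subset of the vertex set. -/
noncomputable def hellyNumber (G : SimpleGraph V) : ℕ :=
  sSup {n : ℕ | ∃ S : Set V, HellyIndep G S ∧ S.ncard = n}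

/-- `S` is Radon independent: no partition of `S` into two nonempty disjoint parts has
intersecting hulls. -/
def RadonIndep (G : SimpleGraph V) (S : Set V) : Prop :=
  ¬ ∃ S₁ S₂ : Set V, S₁ ∪ S₂ = S ∧ Disjoint S₁ S₂ ∧ S₁.Nonempty ∧ S₂.Nonempty ∧
    (deltaHull G S₁ ∩ deltaHull G S₂).Nonempty

/-- The Radon number of `G` w.r.t. Δ-convexity. -/
noncomputable def radonNumber (G : SimpleGraph V) : ℕ :=
  sSup {n : ℕ | ∃ S : Set V, RadonIndep G S ∧ S.ncard = n}

/-- `S` is convexly independent: `a ∉ ⟨S \ {a}⟩` for every `a ∈ S`. -/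
def ConvIndep (G : SimpleGraph V) (S : Set V) : Prop :=
  ∀ a ∈ S, a ∉ deltaHull G (S \ {a})

/-- The rank of `G` w.r.t. Δ-convexity. -/
noncomputable def rankDelta (G : SimpleGraph V) : ℕ :=
  sSup {n : ℕ | ∃ S : Set V, ConvIndep G S ∧ S.ncard = n}

/-- The independence number: maximum cardinality of a set of pairwise non-adjacent
vertices. -/
noncomputable def alphaNum (G : SimpleGraph V) : ℕ :=
  sSup {n : ℕ | ∃ S : Set V, S.Pairwise (fun a b => ¬ G.Adj a b) ∧ S.ncard = n}

/-- `G` is 2-connected: at least 3 vertices, connected, and deleting any single vertex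
leaves a connected graph. -/
def TwoConnected (G : SimpleGraph V) : Prop :=
  3 ≤ Nat.card V ∧ G.Connected ∧ ∀ v : V, (G.induce {u : V | u ≠ v}).Connected

/-- `G` is chordal: every cycle of length at least 4 has a chord, i.e. an edge of `G`
joining two vertices of the cycle that is not an edge of the cycle. -/
def ChordalGraph (G : SimpleGraph V) : Prop :=
  ∀ (v : V) (c : G.Walk v v), c.IsCycle → 4 ≤ c.length →
    ∃ x y : V, x ∈ c.support ∧ y ∈ c.support ∧ G.Adj x y ∧ s(x, y) ∉ c.edges

/-- `B` induces a connected subgraph of `G` with at least two vertices and no cut vertex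
(so: an edge, or a 2-connected subgraph). -/
def NoCutSet (G : SimpleGraph V) (B : Set V) : Prop :=
  2 ≤ B.ncard ∧ (G.induce B).Connected ∧ ∀ v ∈ B, (G.induce (B \ {v})).Connected

/-- `B` is (the vertex set of) a block of `G`: a maximal 2-connected subgraph, where a
bridge together with its endpoints also counts as a block. -/
def IsBlock (G : SimpleGraph V) (B : Set V) : Prop :=
  NoCutSet G B ∧ ∀ B' : Set V, NoCutSet G B' → B ⊆ B' → B = B'

/-- The set `B` induces a complete subgraph of `G`. -/
def CompleteOn (G : SimpleGraph V) (B : Set V) : Prop :=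
  ∀ u ∈ B, ∀ v ∈ B, u ≠ v → G.Adj u v

lemma subset_deltaHull (G : SimpleGraph V) (S : Set V) : S ⊆ deltaHull G S := by
  intro x hx T hT
  exact hT.1 hx

/-- A Radon independent set cannot contain all three vertices of a triangle. -/
lemma radonIndep_triangle {G : SimpleGraph V} {S : Set V} (hS : RadonIndep G S)
    {a b c : V} (hab : G.Adj a b) (hca : G.Adj c a) (hcb : G.Adj c b)
    (ha : a ∈ S) (hb : b ∈ S) (hc : c ∈ S) : False := by
  apply hS
  refine ⟨{a, b}, S \ {a, b}, ?_, Set.disjoint_sdiff_right, ⟨a, by simp⟩,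
    ⟨c, hc, by simp [hca.ne, hcb.ne]⟩, ⟨c, ?_, ?_⟩⟩
  · apply Set.union_diff_cancel
    intro x hx
    rcases hx with rfl | rfl
    · exact ha
    · exact hb
  · intro T hT
    exact hT.2 (hT.1 (by simp)) (hT.1 (by simp)) hab hca hcb
  · exact subset_deltaHull G _ (by exact ⟨hc, by simp [hca.ne, hcb.ne]⟩)

/-- If a finite simple connected graph `G` has exactly `k` triangles and `m`
vertices lying on no triangle, then `r_Δ(G) ≤ m + 2k`. -/
theorem stmt_14 {V : Type*} [Fintype V] (G : SimpleGraph V) (hconn : G.Connected)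
    (k m : ℕ)
    (hk : {t : Finset V | G.IsNClique 3 t}.ncard = k)
    (hm : {v : V | ∀ t : Finset V, G.IsNClique 3 t → v ∉ t}.ncard = m) :
    radonNumber G ≤ m + 2 * k := by
  classical
  apply csSup_le'
  rintro n ⟨S, hRI, rfl⟩
  set T : Set V := {v : V | ∀ t : Finset V, G.IsNClique 3 t → v ∉ t} with hT
  -- split S
  have hsplit : (S ∩ T).ncard + (S \ T).ncard = S.ncard :=
    Set.ncard_inter_add_ncard_diff_eq_ncard S T
  have h1 : (S ∩ T).ncard ≤ m := by
    rw [← hm]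
    exact Set.ncard_le_ncard Set.inter_subset_right
  have h2 : (S \ T).ncard ≤ 2 * k := by
    set Tri : Finset (Finset V) :=
      (Set.toFinite {t : Finset V | G.IsNClique 3 t}).toFinset with hTri
    have hTricard : Tri.card = k := by
      rw [hTri, ← hk, Set.ncard_eq_toFinset_card']
      simp
    have hAfin : (S \ T).Finite := Set.toFinite _
    have hsub : hAfin.toFinset ⊆ Tri.biUnion (fun t => t.filter (· ∈ S)) := by
      intro v hv
      rw [Set.Finite.mem_toFinset] at hv
      obtain ⟨hvS, hvT⟩ := hv
      simp only [hT, Set.mem_setOf_eq, not_forall] at hvT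
      obtain ⟨t, ht, hvt⟩ := hvT
      push_neg at hvt
      refine Finset.mem_biUnion.2 ⟨t, ?_, ?_⟩
      · rw [hTri, Set.Finite.mem_toFinset]; exact ht
      · exact Finset.mem_filter.2 ⟨hvt, hvS⟩
    have hfib : ∀ t ∈ Tri, (t.filter (· ∈ S)).card ≤ 2 := by
      intro t ht
      by_contra h
      push_neg at h
      have htclique : G.IsNClique 3 t := by
        rw [hTri, Set.Finite.mem_toFinset] at ht; exact ht
      have hle : (t.filter (· ∈ S)).card ≤ 3 :=
        htclique.2 ▸ Finset.card_le_card (Finset.filter_subset _ _)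
      have heq : t.filter (· ∈ S) = t := by
        apply Finset.eq_of_subset_of_card_le (Finset.filter_subset _ _)
        have ht3 : t.card = 3 := htclique.2
        omega
      have hall : ∀ x ∈ t, x ∈ S := by
        intro x hx
        have := heq ▸ hx
        exact (Finset.mem_filter.1 this).2
      obtain ⟨a, b, c, hab', hac', hbc', rfl⟩ := Finset.card_eq_three.1 htclique.2
      have hclique := htclique.1
      have hab : G.Adj a b := hclique (by simp) (by simp) hab'
      have hca : G.Adj c a := hclique (by simp) (by simp) (Ne.symm hac')
      have hcb : G.Adj c b := hclique (by simp) (by simp) (Ne.symm hbc')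
      exact radonIndep_triangle hRI hab hca hcb (hall a (by simp)) (hall b (by simp))
        (hall c (by simp))
    calc (S \ T).ncard = hAfin.toFinset.card := (Set.ncard_eq_toFinset_card _ hAfin)
      _ ≤ (Tri.biUnion (fun t => t.filter (· ∈ S))).card := Finset.card_le_card hsub
      _ ≤ ∑ t ∈ Tri, (t.filter (· ∈ S)).card := Finset.card_biUnion_le
      _ ≤ ∑ _t ∈ Tri, 2 := Finset.sum_le_sum hfib
      _ = 2 * k := by rw [Finset.sum_const, hTricard]; ring
  omega
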